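/- For every n ≥ 1, every endomorphism (f₁,f₂,f₃,f₄) of the representation N_n of Q satisfies f₁=f₂=f₃=f₄ and f₁∘J_n(0)=J_n(0)∘f₁; the k-algebra map k[X]/(Xⁿ) → End(N_n) sending the class of X to the endomorphism (J_n(0),J_n(0),J_n(0),J_n(0)) is an isomorphism of k-algebras. In particular End(N_n) is a local ring and N_n is indecomposable. -/

import Mathlib

variable (k : Type) [Field k]

/-- A finite-dimensional representation of the quiver `Q` with vertices `1,2,3,4`
and arrows `a : 1 → 2`, `b : 1 → 3`, `c : 2 → 4`, `d : 3 → 4`. -/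
structure QRep where
  V1 : Type
  V2 : Type
  V3 : Type
  V4 : Type
  [acg1 : AddCommGroup V1]
  [acg2 : AddCommGroup V2]
  [acg3 : AddCommGroup V3]
  [acg4 : AddCommGroup V4]
  [mod1 : Module k V1]
  [mod2 : Module k V2]
  [mod3 : Module k V3]
  [mod4 : Module k V4]
  [fin1 : FiniteDimensional k V1]
  [fin2 : FiniteDimensional k V2]
  [fin3 : FiniteDimensional k V3]
  [fin4 : FiniteDimensional k V4]
  ma : V1 →ₗ[k] V2
  mb : V1 →ₗ[k] V3
  mc : V2 →ₗ[k] V4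
  md : V3 →ₗ[k] V4

attribute [instance] QRep.acg1 QRep.acg2 QRep.acg3 QRep.acg4
  QRep.mod1 QRep.mod2 QRep.mod3 QRep.mod4
  QRep.fin1 QRep.fin2 QRep.fin3 QRep.fin4

variable {k}

/-- Morphisms of representations of `Q`. -/
@[ext]
structure QHom (M N : QRep k) where
  f1 : M.V1 →ₗ[k] N.V1
  f2 : M.V2 →ₗ[k] N.V2
  f3 : M.V3 →ₗ[k] N.V3
  f4 : M.V4 →ₗ[k] N.V4
  comm_a : f2 ∘ₗ M.ma = N.ma ∘ₗ f1
  comm_b : f3 ∘ₗ M.mb = N.mb ∘ₗ f1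
  comm_c : f4 ∘ₗ M.mc = N.mc ∘ₗ f2
  comm_d : f4 ∘ₗ M.md = N.md ∘ₗ f3

/-- Two representations are isomorphic iff there is a morphism all of whose
components are bijective. -/
def QIso (M N : QRep k) : Prop :=
  ∃ f : QHom M N, Function.Bijective f.f1 ∧ Function.Bijective f.f2 ∧
    Function.Bijective f.f3 ∧ Function.Bijective f.f4

/-- The zero representation(s). -/
def QRep.IsZeroRep (M : QRep k) : Prop :=
  Subsingleton M.V1 ∧ Subsingleton M.V2 ∧ Subsingleton M.V3 ∧ Subsingleton M.V4

/-- Vertexwise direct sum of representations. -/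
def QRep.dsum (M N : QRep k) : QRep k where
  V1 := M.V1 × N.V1
  V2 := M.V2 × N.V2
  V3 := M.V3 × N.V3
  V4 := M.V4 × N.V4
  ma := M.ma.prodMap N.ma
  mb := M.mb.prodMap N.mb
  mc := M.mc.prodMap N.mc
  md := M.md.prodMap N.md

/-- Direct sum of `n` copies of a representation. -/
def QRep.dpow (M : QRep k) (n : ℕ) : QRep k where
  V1 := Fin n → M.V1
  V2 := Fin n → M.V2
  V3 := Fin n → M.V3
  V4 := Fin n → M.V4
  ma := M.ma.compLeft (Fin n)
  mb := M.mb.compLeft (Fin n)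
  mc := M.mc.compLeft (Fin n)
  md := M.md.compLeft (Fin n)

/-- A representation is indecomposable if it is nonzero and not isomorphic to a
direct sum of two nonzero representations. -/
def QRep.Indecomposable (M : QRep k) : Prop :=
  ¬ M.IsZeroRep ∧ ∀ A B : QRep k, QIso M (A.dsum B) → A.IsZeroRep ∨ B.IsZeroRep

/-- `0 → A → B → C → 0` is short exact (vertexwise). -/
def QShortExact {A B C : QRep k} (f : QHom A B) (g : QHom B C) : Prop :=
  (Function.Injective f.f1 ∧ Function.Injective f.f2 ∧
    Function.Injective f.f3 ∧ Function.Injective f.f4) ∧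
  (Function.Surjective g.f1 ∧ Function.Surjective g.f2 ∧
    Function.Surjective g.f3 ∧ Function.Surjective g.f4) ∧
  (LinearMap.range f.f1 = LinearMap.ker g.f1 ∧ LinearMap.range f.f2 = LinearMap.ker g.f2 ∧
    LinearMap.range f.f3 = LinearMap.ker g.f3 ∧ LinearMap.range f.f4 = LinearMap.ker g.f4)

variable (k)

/-- The `n×n` Jordan block with eigenvalue `lam`, as a linear endomorphism of `kⁿ`. -/
def jordan (n : ℕ) (lam : k) : (Fin n → k) →ₗ[k] (Fin n → k) :=
  Matrix.mulVecLin (Matrix.of fun i j : Fin n =>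
    if i = j then lam else if (i : ℕ) + 1 = (j : ℕ) then 1 else 0)

/-- The representation `M_n(λ) = (kⁿ,kⁿ,kⁿ,kⁿ; id,id,id,J_n(λ))`. -/
def Mlam (n : ℕ) (lam : k) : QRep k where
  V1 := Fin n → k
  V2 := Fin n → k
  V3 := Fin n → k
  V4 := Fin n → k
  ma := LinearMap.id
  mb := LinearMap.id
  mc := LinearMap.id
  md := jordan k n lam

/-- The indecomposable projective `P₁ = (k,k,k,k²)`. -/
def P1 : QRep k where
  V1 := k
  V2 := k
  V3 := k
  V4 := k × k
  ma := LinearMap.id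
  mb := LinearMap.id
  mc := LinearMap.inl k k k
  md := LinearMap.inr k k k

/-- The indecomposable projective `P₂ = (0,k,0,k)`. -/
def P2 : QRep k where
  V1 := Fin 0 → k
  V2 := k
  V3 := Fin 0 → k
  V4 := k
  ma := 0
  mb := 0
  mc := LinearMap.id
  md := 0

/-- The indecomposable projective `P₃ = (0,0,k,k)`. -/
def P3 : QRep k where
  V1 := Fin 0 → k
  V2 := Fin 0 → k
  V3 := k
  V4 := k
  ma := 0
  mb := 0
  mc := 0
  md := LinearMap.id

/-- The indecomposable projective `P₄ = (0,0,0,k)`. -/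
def P4 : QRep k where
  V1 := Fin 0 → k
  V2 := Fin 0 → k
  V3 := Fin 0 → k
  V4 := k
  ma := 0
  mb := 0
  mc := 0
  md := 0
variable {k}

lemma QHom.comm_a_apply {M N : QRep k} (f : QHom M N) (x : M.V1) :
    f.f2 (M.ma x) = N.ma (f.f1 x) := LinearMap.congr_fun f.comm_a x

lemma QHom.comm_b_apply {M N : QRep k} (f : QHom M N) (x : M.V1) :
    f.f3 (M.mb x) = N.mb (f.f1 x) := LinearMap.congr_fun f.comm_b x

lemma QHom.comm_c_apply {M N : QRep k} (f : QHom M N) (x : M.V2) :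
    f.f4 (M.mc x) = N.mc (f.f2 x) := LinearMap.congr_fun f.comm_c x

lemma QHom.comm_d_apply {M N : QRep k} (f : QHom M N) (x : M.V3) :
    f.f4 (M.md x) = N.md (f.f3 x) := LinearMap.congr_fun f.comm_d x

/-- The identity morphism of a representation. -/
def QHom.idHom (M : QRep k) : QHom M M :=
  ⟨LinearMap.id, LinearMap.id, LinearMap.id, LinearMap.id, by simp, by simp, by simp, by simp⟩

/-- Composition of morphisms of representations. -/
def QHom.comp {L M N : QRep k} (g : QHom M N) (f : QHom L M) : QHom L N where
  f1 := g.f1 ∘ₗ f.f1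
  f2 := g.f2 ∘ₗ f.f2
  f3 := g.f3 ∘ₗ f.f3
  f4 := g.f4 ∘ₗ f.f4
  comm_a := by ext x; simp [QHom.comm_a_apply]
  comm_b := by ext x; simp [QHom.comm_b_apply]
  comm_c := by ext x; simp [QHom.comm_c_apply]
  comm_d := by ext x; simp [QHom.comm_d_apply]

/-- The zero morphism. -/
def QHom.zeroHom (M N : QRep k) : QHom M N :=
  ⟨0, 0, 0, 0, by simp, by simp, by simp, by simp⟩

/-- Sum of two morphisms. -/
def QHom.add {M N : QRep k} (f g : QHom M N) : QHom M N :=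
  ⟨f.f1 + g.f1, f.f2 + g.f2, f.f3 + g.f3, f.f4 + g.f4,
    by simp [LinearMap.add_comp, LinearMap.comp_add, f.comm_a, g.comm_a],
    by simp [LinearMap.add_comp, LinearMap.comp_add, f.comm_b, g.comm_b],
    by simp [LinearMap.add_comp, LinearMap.comp_add, f.comm_c, g.comm_c],
    by simp [LinearMap.add_comp, LinearMap.comp_add, f.comm_d, g.comm_d]⟩

/-- Scalar multiples of the identity are endomorphisms. -/
def QHom.smulId (M : QRep k) (r : k) : QHom M M :=
  ⟨r • LinearMap.id, r • LinearMap.id, r • LinearMap.id, r • LinearMap.id,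
    by ext x; simp, by ext x; simp, by ext x; simp, by ext x; simp⟩

/-- The endomorphism of the total space of a representation induced by an
endomorphism of the representation. -/
def QHom.prodEnd {M : QRep k} (g : QHom M M) :
    Module.End k (((M.V1 × M.V2) × M.V3) × M.V4) :=
  ((g.f1.prodMap g.f2).prodMap g.f3).prodMap g.f4

/-- The endomorphism algebra `End(M)` of a representation `M`, realized as the
subalgebra of `End(V₁ × V₂ × V₃ × V₄)` consisting of the vertexwise endomorphisms
commuting with the structure maps. -/
def QEnd (M : QRep k) : Subalgebra k (Module.End k (((M.V1 × M.V2) × M.V3) × M.V4)) where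
  carrier := {F | ∃ g : QHom M M, F = g.prodEnd}
  zero_mem' := ⟨QHom.zeroHom M M, LinearMap.ext fun _ => rfl⟩
  one_mem' := ⟨QHom.idHom M, LinearMap.ext fun _ => rfl⟩
  add_mem' := by
    rintro a b ⟨g, rfl⟩ ⟨h, rfl⟩
    exact ⟨g.add h, LinearMap.ext fun _ => rfl⟩
  mul_mem' := by
    rintro a b ⟨g, rfl⟩ ⟨h, rfl⟩
    exact ⟨g.comp h, LinearMap.ext fun _ => rfl⟩
  algebraMap_mem' := fun r =>
    ⟨QHom.smulId M r, LinearMap.ext fun x => by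
      simp [Module.algebraMap_end_apply, QHom.prodEnd, QHom.smulId]⟩

variable (k)

/-- The special-tube representation `N_n = (kⁿ,kⁿ,kⁿ,kⁿ; J_n(0),id,id,id)`. -/
def Nrep (n : ℕ) : QRep k where
  V1 := Fin n → k
  V2 := Fin n → k
  V3 := Fin n → k
  V4 := Fin n → k
  ma := jordan k n 0
  mb := LinearMap.id
  mc := LinearMap.id
  md := LinearMap.id

/-- The endomorphism `(J_n(0), J_n(0), J_n(0), J_n(0))` of `N_n`. -/
def Jend (n : ℕ) : QHom (Nrep k n) (Nrep k n) :=
  ⟨jordan k n 0, jordan k n 0, jordan k n 0, jordan k n 0, rfl, by ext x; rfl, by ext x; rfl,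
    by ext x; rfl⟩

/-!
An endomorphism `f` of `N_n` has `f₁ = f₂ = f₃ = f₄ =: g` (the arrows `b, c, d` are identities)
and `g` commutes with `J = J_n(0)`. The last basis vector is a cyclic vector for `J`, so
everything commuting with `J` is a polynomial in `J`; and since `J` is nilpotent of class exactly
`n`, `p(J) = 0` iff `Xⁿ ∣ p`. Hence `End(N_n) ≅ k[X]/(Xⁿ)`. There every element is a unit or
nilpotent, so the ring is local, and a local ring has no idempotents besides `0` and `1`; an
isomorphism `N_n ≅ A ⊕ B` would turn the projection onto `A` into such an idempotent.
-/
open Polynomial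

variable {k}

theorem Commute.aeval_right {A : Type} [Ring A] [Algebra k A] {h T : A} (hT : Commute h T)
    (q : k[X]) : Commute h (aeval T q) := by
  have hmem : T ∈ Subalgebra.centralizer k {h} :=
    (Subalgebra.mem_centralizer_iff k).mpr fun g hg => (Set.mem_singleton_iff.mp hg) ▸ hT.eq
  have := (aeval (⟨T, hmem⟩ : Subalgebra.centralizer k {h}) q).2
  rw [coe_aeval_mk_apply, Subalgebra.mem_centralizer_iff] at this
  exact this h rfl

theorem Module.End.exists_aeval_eq_of_commute_of_cyclic {V : Type} [AddCommGroup V] [Module k V]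
    {T h : Module.End k V} (v : V) (hv : ∀ w, ∃ p : k[X], aeval T p v = w)
    (hh : Commute h T) : ∃ p : k[X], aeval T p = h := by
  obtain ⟨p, hp⟩ := hv (h v)
  refine ⟨p, LinearMap.ext fun w => ?_⟩
  obtain ⟨q, rfl⟩ := hv w
  calc aeval T p (aeval T q v) = aeval T q (aeval T p v) := by
        rw [← Module.End.mul_apply, ← map_mul, mul_comm, map_mul, Module.End.mul_apply]
    _ = h (aeval T q v) := by rw [hp, ← Module.End.mul_apply, ← (hh.aeval_right q).eq]; rfl

section NilpotentEval

variable {A : Type} [Ring A] [Algebra k A] {x : A}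

theorem commute_self_aeval (x : A) (q : k[X]) : Commute x (aeval x q) := by
  simpa using (Commute.all X q).map (aeval x)

theorem isUnit_aeval_of_coeff_zero_ne_zero (hx : IsNilpotent x) {p : k[X]} (hp : p.coeff 0 ≠ 0) :
    IsUnit (aeval x p) := by
  obtain ⟨q, hq⟩ := X_dvd_iff.mpr (show (p - C (p.coeff 0)).coeff 0 = 0 by simp)
  have hpq : p = C (p.coeff 0) + X * q := by rw [← hq]; ring
  rw [hpq, map_add, map_mul, aeval_C, aeval_X]
  exact ((commute_self_aeval x q).isNilpotent_mul_right hx).isUnit_add_left_of_commute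
    ((isUnit_iff_ne_zero.mpr hp).map (algebraMap k A)) (Algebra.commute_algebraMap_right _ _)

theorem isUnit_or_isNilpotent_aeval (hx : IsNilpotent x) (p : k[X]) :
    IsUnit (aeval x p) ∨ IsNilpotent (aeval x p) := by
  by_cases hp : p.coeff 0 = 0
  · obtain ⟨q, rfl⟩ := X_dvd_iff.mpr hp
    rw [map_mul, aeval_X]
    exact Or.inr ((commute_self_aeval x q).isNilpotent_mul_right hx)
  · exact Or.inl (isUnit_aeval_of_coeff_zero_ne_zero hx hp)

theorem aeval_eq_zero_iff_X_pow_dvd {m : ℕ} (hx : x ^ (m + 1) = 0) (hx' : x ^ m ≠ 0)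
    {p : k[X]} : aeval x p = 0 ↔ X ^ (m + 1) ∣ p := by
  refine ⟨fun hp => ?_, fun ⟨q, hq⟩ => by rw [hq, map_mul, map_pow, aeval_X, hx, zero_mul]⟩
  rcases eq_or_ne p 0 with rfl | hp0
  · exact dvd_zero _
  obtain ⟨q, hpq, hq⟩ := p.exists_eq_pow_rootMultiplicity_mul_and_not_dvd hp0 0
  rw [map_zero, sub_zero] at hpq hq
  have hxr : x ^ p.rootMultiplicity 0 = 0 := by
    rw [hpq, map_mul, map_pow, aeval_X] at hp
    exact (isUnit_aeval_of_coeff_zero_ne_zero ⟨m + 1, hx⟩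
      (mt X_dvd_iff.mpr hq)).mul_left_eq_zero.mp hp
  have hmr : m + 1 ≤ p.rootMultiplicity 0 := by
    by_contra h
    exact hx' (pow_eq_zero_of_le (by omega) hxr)
  rw [hpq]
  exact (pow_dvd_pow X hmr).mul_right q

end NilpotentEval

theorem IsLocalRing.of_isUnit_or_isNilpotent {R : Type} [Ring R] [Nontrivial R]
    (h : ∀ a : R, IsUnit a ∨ IsNilpotent a) : IsLocalRing R :=
  of_isUnit_or_isUnit_one_sub_self fun a => (h a).imp_right IsNilpotent.isUnit_one_sub

theorem IsIdempotentElem.eq_zero_or_eq_one_of_isLocalRing {R : Type} [Ring R] [IsLocalRing R]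
    {e : R} (he : IsIdempotentElem e) : e = 0 ∨ e = 1 := by
  rcases IsLocalRing.isUnit_or_isUnit_of_add_one (add_sub_cancel e 1) with hu | hu
  · exact Or.inr (hu.mul_left_cancel (he.eq.trans (mul_one e).symm))
  · exact Or.inl (hu.mul_left_cancel (by rw [sub_mul, one_mul, he.eq, sub_self, mul_zero]))

section Jordan

variable {n : ℕ}

theorem jordan_zero_apply (v : Fin n → k) (i : Fin n) :
    jordan k n 0 v i = if h : (i : ℕ) + 1 < n then v ⟨i + 1, h⟩ else 0 := by
  simp only [jordan, Matrix.mulVecLin_apply, Matrix.mulVec, dotProduct, Matrix.of_apply]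
  split_ifs with h
  · rw [Finset.sum_eq_single (⟨(i : ℕ) + 1, h⟩ : Fin n)]
    · simp [Fin.ext_iff]
    · intro j _ hj
      simp [Fin.ext_iff] at hj ⊢
      omega
    · simp
  · refine Finset.sum_eq_zero fun j _ => ?_
    simp [Fin.ext_iff]
    omega

theorem jordan_zero_pow_apply (m : ℕ) (v : Fin n → k) (i : Fin n) :
    (jordan k n 0 ^ m) v i = if h : (i : ℕ) + m < n then v ⟨i + m, h⟩ else 0 := by
  induction m generalizing v i with
  | zero => simp
  | succ m ih =>
    rw [pow_succ', Module.End.mul_apply, jordan_zero_apply]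
    by_cases h : (i : ℕ) + 1 < n
    · rw [dif_pos h, ih]
      simp only [Nat.add_assoc, Nat.add_comm 1 m]
    · rw [dif_neg h, dif_neg (by omega)]

theorem jordan_zero_pow_self : jordan k n 0 ^ n = 0 :=
  LinearMap.ext fun v => funext fun i => by simp [jordan_zero_pow_apply]

theorem jordan_zero_pow_single_last (i : Fin (n + 1)) :
    (jordan k (n + 1) 0 ^ (n - (i : ℕ))) (Pi.single (Fin.last n) 1) = Pi.single i 1 := by
  funext j
  rw [jordan_zero_pow_apply]
  simp only [Pi.single_apply, Fin.ext_iff, Fin.val_last]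
  have := i.isLt
  split_ifs <;> first | rfl | (exfalso; omega)

theorem jordan_zero_pow_ne_zero : jordan k (n + 1) 0 ^ n ≠ 0 := fun h => by
  simpa [h] using congrFun (jordan_zero_pow_single_last (k := k) (0 : Fin (n + 1))) 0

theorem jordan_zero_cyclic_single_last (w : Fin (n + 1) → k) :
    ∃ p : k[X], aeval (jordan k (n + 1) 0) p (Pi.single (Fin.last n) 1) = w :=
  ⟨∑ i, C (w i) * X ^ (n - (i : ℕ)), by
    simpa [jordan_zero_pow_single_last] using (Pi.basisFun k (Fin (n + 1))).sum_repr w⟩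

end Jordan

theorem LinearEquiv.symm_comp_eq_comp_symm {V₁ V₂ W₁ W₂ : Type} [AddCommGroup V₁]
    [AddCommGroup V₂] [AddCommGroup W₁] [AddCommGroup W₂] [Module k V₁] [Module k V₂]
    [Module k W₁] [Module k W₂] {e₁ : V₁ ≃ₗ[k] W₁} {e₂ : V₂ ≃ₗ[k] W₂} {m : V₁ →ₗ[k] V₂}
    {m' : W₁ →ₗ[k] W₂} (h : e₂.toLinearMap ∘ₗ m = m' ∘ₗ e₁) :
    e₂.symm.toLinearMap ∘ₗ m' = m ∘ₗ e₁.symm := by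
  ext x
  apply e₂.injective
  simpa using (LinearMap.congr_fun h (e₁.symm x)).symm

namespace QHom

variable {L M N : QRep k}

theorem comp_zeroHom (f : QHom M N) : f.comp (zeroHom L M) = zeroHom L N := by
  ext <;> simp [comp, zeroHom]

theorem zeroHom_comp (f : QHom L M) : (zeroHom M N).comp f = zeroHom L N := rfl

noncomputable def invOfBijective (f : QHom M N) (h₁ : Function.Bijective f.f1)
    (h₂ : Function.Bijective f.f2) (h₃ : Function.Bijective f.f3)
    (h₄ : Function.Bijective f.f4) : QHom N M where
  f1 := (LinearEquiv.ofBijective f.f1 h₁).symm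
  f2 := (LinearEquiv.ofBijective f.f2 h₂).symm
  f3 := (LinearEquiv.ofBijective f.f3 h₃).symm
  f4 := (LinearEquiv.ofBijective f.f4 h₄).symm
  comm_a := LinearEquiv.symm_comp_eq_comp_symm f.comm_a
  comm_b := LinearEquiv.symm_comp_eq_comp_symm f.comm_b
  comm_c := LinearEquiv.symm_comp_eq_comp_symm f.comm_c
  comm_d := LinearEquiv.symm_comp_eq_comp_symm f.comm_d

theorem comp_invOfBijective (f : QHom M N) (h₁ : Function.Bijective f.f1)
    (h₂ : Function.Bijective f.f2) (h₃ : Function.Bijective f.f3)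
    (h₄ : Function.Bijective f.f4) : f.comp (f.invOfBijective h₁ h₂ h₃ h₄) = idHom N := by
  ext x <;> simp [comp, invOfBijective, idHom]

def toQEnd (g : QHom M M) : QEnd M := ⟨g.prodEnd, g, rfl⟩

theorem toQEnd_comp (g h : QHom M M) : (g.comp h).toQEnd = g.toQEnd * h.toQEnd := rfl

theorem toQEnd_injective : Function.Injective (toQEnd (M := M)) := by
  intro g h hgh
  have hgh' := congrArg Subtype.val hgh
  ext x
  · exact congrArg (·.1.1.1) (LinearMap.congr_fun hgh' (((x, 0), 0), 0))
  · exact congrArg (·.1.1.2) (LinearMap.congr_fun hgh' (((0, x), 0), 0))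
  · exact congrArg (·.1.2) (LinearMap.congr_fun hgh' (((0, 0), x), 0))
  · exact congrArg (·.2) (LinearMap.congr_fun hgh' (((0, 0), 0), x))

theorem toQEnd_eq_zero_iff {g : QHom M M} : g.toQEnd = 0 ↔ g = zeroHom M M :=
  toQEnd_injective.eq_iff' rfl

theorem toQEnd_eq_one_iff {g : QHom M M} : g.toQEnd = 1 ↔ g = idHom M :=
  toQEnd_injective.eq_iff' rfl

end QHom

def QRep.dsumFstProj (A B : QRep k) : QHom (A.dsum B) (A.dsum B) where
  f1 := LinearMap.id.prodMap 0
  f2 := LinearMap.id.prodMap 0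
  f3 := LinearMap.id.prodMap 0
  f4 := LinearMap.id.prodMap 0
  comm_a := LinearMap.ext fun _ => Prod.ext rfl (map_zero B.ma).symm
  comm_b := LinearMap.ext fun _ => Prod.ext rfl (map_zero B.mb).symm
  comm_c := LinearMap.ext fun _ => Prod.ext rfl (map_zero B.mc).symm
  comm_d := LinearMap.ext fun _ => Prod.ext rfl (map_zero B.md).symm

theorem subsingleton_of_id_prodMap_zero_eq_zero {V W : Type} [AddCommGroup V] [AddCommGroup W]
    [Module k V] [Module k W] (h : (LinearMap.id : V →ₗ[k] V).prodMap (0 : W →ₗ[k] W) = 0) :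
    Subsingleton V :=
  subsingleton_of_forall_eq 0 fun x => congrArg Prod.fst (LinearMap.congr_fun h (x, 0))

theorem subsingleton_of_id_prodMap_zero_eq_id {V W : Type} [AddCommGroup V] [AddCommGroup W]
    [Module k V] [Module k W]
    (h : (LinearMap.id : V →ₗ[k] V).prodMap (0 : W →ₗ[k] W) = LinearMap.id) :
    Subsingleton W :=
  subsingleton_of_forall_eq 0 fun y => (congrArg Prod.snd (LinearMap.congr_fun h (0, y))).symm

namespace QRep

variable {A B M : QRep k}

theorem isZeroRep_of_dsumFstProj_eq_zero (h : dsumFstProj A B = QHom.zeroHom _ _) :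
    A.IsZeroRep :=
  ⟨subsingleton_of_id_prodMap_zero_eq_zero (congrArg QHom.f1 h),
    subsingleton_of_id_prodMap_zero_eq_zero (congrArg QHom.f2 h),
    subsingleton_of_id_prodMap_zero_eq_zero (congrArg QHom.f3 h),
    subsingleton_of_id_prodMap_zero_eq_zero (congrArg QHom.f4 h)⟩

theorem isZeroRep_of_dsumFstProj_eq_id (h : dsumFstProj A B = QHom.idHom _) : B.IsZeroRep :=
  ⟨subsingleton_of_id_prodMap_zero_eq_id (congrArg QHom.f1 h),
    subsingleton_of_id_prodMap_zero_eq_id (congrArg QHom.f2 h),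
    subsingleton_of_id_prodMap_zero_eq_id (congrArg QHom.f3 h),
    subsingleton_of_id_prodMap_zero_eq_id (congrArg QHom.f4 h)⟩

theorem not_isZeroRep_of_nontrivial [Nontrivial (QEnd M)] : ¬ M.IsZeroRep := by
  rintro ⟨_, _, _, _⟩
  exact not_subsingleton (QEnd M) inferInstance

theorem indecomposable_of_isLocalRing [IsLocalRing (QEnd M)] : M.Indecomposable := by
  refine ⟨not_isZeroRep_of_nontrivial, fun A B ⟨f, h₁, h₂, h₃, h₄⟩ => ?_⟩
  set g := f.invOfBijective h₁ h₂ h₃ h₄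
  have hfg : f.comp g = QHom.idHom _ := f.comp_invOfBijective h₁ h₂ h₃ h₄
  set π := dsumFstProj A B
  -- `π` is recovered from the endomorphism `e = g π f` of `M` as `f e g`.
  set e := g.comp (π.comp f)
  have hπ : f.comp (e.comp g) = π := by
    change (f.comp g).comp (π.comp (f.comp g)) = π
    rw [hfg]
    rfl
  have he : IsIdempotentElem e.toQEnd := by
    rw [IsIdempotentElem, ← QHom.toQEnd_comp]
    change (g.comp (π.comp ((f.comp g).comp (π.comp f)))).toQEnd = e.toQEnd
    rw [hfg]
    rfl
  rcases IsIdempotentElem.eq_zero_or_eq_one_of_isLocalRing (R := QEnd M) he with he0 | he1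
  · left
    refine isZeroRep_of_dsumFstProj_eq_zero (B := B) (hπ.symm.trans ?_)
    rw [QHom.toQEnd_eq_zero_iff.mp he0, QHom.zeroHom_comp, QHom.comp_zeroHom]
  · right
    refine isZeroRep_of_dsumFstProj_eq_id (hπ.symm.trans ?_)
    rw [QHom.toQEnd_eq_one_iff.mp he1]
    exact hfg

end QRep

def Module.End.diag4 (V : Type) [AddCommGroup V] [Module k V] :
    Module.End k V →ₐ[k] Module.End k (((V × V) × V) × V) where
  toFun f := ((f.prodMap f).prodMap f).prodMap f
  map_one' := rfl
  map_mul' _ _ := rfl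
  map_zero' := rfl
  map_add' _ _ := rfl
  commutes' _ := rfl

theorem Module.End.diag4_injective (V : Type) [AddCommGroup V] [Module k V] :
    Function.Injective (Module.End.diag4 (k := k) V) := fun _ _ h =>
  LinearMap.ext fun v => congrArg Prod.snd (LinearMap.congr_fun h (((v, v), v), v))

section Nrep

variable {n : ℕ}

theorem Nrep_endo_eq_and_commute_jordan (f : QHom (Nrep k n) (Nrep k n)) :
    (f.f1 = f.f2 ∧ f.f2 = f.f3 ∧ f.f3 = f.f4) ∧
      f.f1 ∘ₗ jordan k n 0 = jordan k n 0 ∘ₗ f.f1 := by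
  have h31 : f.f3 = f.f1 := f.comm_b
  have h42 : f.f4 = f.f2 := f.comm_c
  have h43 : f.f4 = f.f3 := f.comm_d
  have h21 : f.f2 = f.f1 := by rw [← h42, h43, h31]
  have ha : f.f2 ∘ₗ jordan k n 0 = jordan k n 0 ∘ₗ f.f1 := f.comm_a
  rw [h21] at ha
  exact ⟨⟨h21.symm, by rw [h21, h31], by rw [h43]⟩, ha⟩

theorem Nrep_prodEnd_eq_diag4 (f : QHom (Nrep k n) (Nrep k n)) :
    f.prodEnd = Module.End.diag4 _ f.f1 := by
  obtain ⟨⟨h12, h23, h34⟩, -⟩ := Nrep_endo_eq_and_commute_jordan f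
  change ((f.f1.prodMap f.f2).prodMap f.f3).prodMap f.f4 =
    ((f.f1.prodMap f.f1).prodMap f.f1).prodMap f.f1
  rw [← h34, ← h23, ← h12]
  rfl

theorem val_aeval_Jend (p : k[X]) :
    (aeval (Jend k n).toQEnd p).val =
      Module.End.diag4 _ (aeval (jordan k n 0) p) := by
  change (QEnd (Nrep k n)).val (aeval (Jend k n).toQEnd p) = _
  rw [← aeval_algHom_apply, ← aeval_algHom_apply]
  rfl

theorem aeval_Jend_eq_zero_iff {p : k[X]} :
    aeval (Jend k n).toQEnd p = 0 ↔ aeval (jordan k n 0) p = 0 := by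
  constructor
  · intro h
    apply Module.End.diag4_injective
    rw [map_zero, ← val_aeval_Jend, h]
    rfl
  · intro h
    apply Subtype.ext
    rw [val_aeval_Jend, h, map_zero]
    rfl

theorem ker_aeval_Jend :
    RingHom.ker (aeval (R := k) (Jend k (n + 1)).toQEnd) = Ideal.span {X ^ (n + 1)} := by
  ext p
  rw [RingHom.mem_ker, Ideal.mem_span_singleton, aeval_Jend_eq_zero_iff,
    aeval_eq_zero_iff_X_pow_dvd jordan_zero_pow_self jordan_zero_pow_ne_zero]

theorem aeval_Jend_surjective : Function.Surjective (aeval (R := k) (Jend k (n + 1)).toQEnd) := by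
  rintro ⟨_, g, rfl⟩
  have hg : Commute (g.f1 : Module.End k (Fin (n + 1) → k)) (jordan k (n + 1) 0) :=
    (Nrep_endo_eq_and_commute_jordan g).2
  obtain ⟨p, hp⟩ := Module.End.exists_aeval_eq_of_commute_of_cyclic (T := jordan k (n + 1) 0)
    (Pi.single (Fin.last n) 1) jordan_zero_cyclic_single_last hg
  refine ⟨p, Subtype.ext ?_⟩
  rw [val_aeval_Jend, hp]
  exact (Nrep_prodEnd_eq_diag4 g).symm

instance Nrep.nontrivial_V1 : Nontrivial (Nrep k (n + 1)).V1 := inferInstanceAs (Nontrivial (Fin (n + 1) → k))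

theorem isLocalRing_QEnd_Nrep : IsLocalRing (QEnd (Nrep k (n + 1))) := by
  have hnil : IsNilpotent (Jend k (n + 1)).toQEnd := by
    refine ⟨n + 1, ?_⟩
    rw [← aeval_X_pow (R := k), ← RingHom.mem_ker, ker_aeval_Jend]
    exact Ideal.mem_span_singleton_self _
  refine IsLocalRing.of_isUnit_or_isNilpotent (R := QEnd (Nrep k (n + 1))) fun a => ?_
  obtain ⟨p, rfl⟩ := aeval_Jend_surjective a
  exact isUnit_or_isNilpotent_aeval hnil p

end Nrep

/-- every endomorphism of `N_n` has `f₁ = f₂ = f₃ = f₄` with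
`f₁` commuting with `J_n(0)`; the `k`-algebra map `k[X]/(Xⁿ) → End(N_n)` sending
the class of `X` to `(J_n(0),J_n(0),J_n(0),J_n(0))` is an isomorphism of
`k`-algebras; in particular `End(N_n)` is local and `N_n` is indecomposable. -/
theorem stmt2 (k : Type) [Field k] (n : ℕ) (hn : 1 ≤ n) :
    (∀ f : QHom (Nrep k n) (Nrep k n),
      (f.f1 = f.f2 ∧ f.f2 = f.f3 ∧ f.f3 = f.f4) ∧
      f.f1 ∘ₗ jordan k n 0 = jordan k n 0 ∘ₗ f.f1) ∧
    (∃ e : (Polynomial k ⧸ Ideal.span {(Polynomial.X : Polynomial k) ^ n}) ≃ₐ[k]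
        QEnd (Nrep k n),
      e (Ideal.Quotient.mk _ Polynomial.X) = ⟨(Jend k n).prodEnd, ⟨Jend k n, rfl⟩⟩) ∧
    IsLocalRing (QEnd (Nrep k n)) ∧ (Nrep k n).Indecomposable := by
  obtain ⟨n, rfl⟩ := Nat.exists_eq_add_of_le' hn
  have hloc : IsLocalRing (QEnd (Nrep k (n + 1))) := isLocalRing_QEnd_Nrep
  refine ⟨Nrep_endo_eq_and_commute_jordan,
    ⟨(Ideal.quotientEquivAlgOfEq k ker_aeval_Jend.symm).trans
      (Ideal.quotientKerAlgEquivOfSurjective aeval_Jend_surjective), ?_⟩,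
    hloc, QRep.indecomposable_of_isLocalRing⟩
  rw [AlgEquiv.trans_apply, Ideal.quotientEquivAlgOfEq_mk,
    Ideal.quotientKerAlgEquivOfSurjective_mk, aeval_X]
  rfl
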